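/- arXiv:2603.06309 — 5 statements merged into one kernel-verified Lean document; each statement's English description precedes it below -/
import Mathlib

section
/- Let R = F_q[x]/(x^m − λ) and R* = F_q[x]/(x^m − λ^{-1}), with Euclidean pairing ⟨a,b⟩_e = Σ_{i=0}^{m-1} a_i b_i of coefficient vectors of the canonical representatives. For any polynomial t(x) of degree ≤ m−1 and any a(x), b(x), one has ⟨a(x)t(x), b(x)⟩_e = ⟨a(x), b(x)t°(x)⟩_e, where t°(x) = λ x^m t(1/x), the first multiplication is taken in R, and the second in R*. -/
open Polynomial Finset

lemma key {F : Type*} [Field F] (m j : ℕ) (hm : 0 < m) (hj : j ≤ m) (c : F) (P : F[X])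
    (hP : ∀ i, m ≤ i → P.coeff i = 0) (k : ℕ) (hk : k < m) :
    ((P * X ^ j) %ₘ (X ^ m - C c)).coeff k =
      if j ≤ k then P.coeff (k - j) else c * P.coeff (k + m - j) := by
  have hmonic : (X ^ m - C c).Monic := monic_X_pow_sub_C c hm.ne'
  set R : F[X] := ∑ i ∈ range m,
    C (if j ≤ i then P.coeff (i - j) else c * P.coeff (i + m - j)) * X ^ i with hR
  have hRc : ∀ n, R.coeff n =
      if n < m then (if j ≤ n then P.coeff (n - j) else c * P.coeff (n + m - j)) else 0 := by
    intro n
    rw [hR, finset_sum_coeff]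
    simp only [coeff_C_mul, coeff_X_pow, mul_ite, mul_one, mul_zero]
    rw [Finset.sum_ite_eq (range m) n]
    simp [Finset.mem_range]
  set Q : F[X] := ∑ i ∈ range j, C (P.coeff (i + m - j)) * X ^ i with hQ
  have hQc : ∀ n, Q.coeff n = if n < j then P.coeff (n + m - j) else 0 := by
    intro n
    rw [hQ, finset_sum_coeff]
    simp only [coeff_C_mul, coeff_X_pow, mul_ite, mul_one, mul_zero]
    rw [Finset.sum_ite_eq (range j) n]
    simp [Finset.mem_range]
  have hid : P * X ^ j - R = (X ^ m - C c) * (Q * 1) := by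
    ext n
    rw [mul_one, sub_mul, coeff_sub, coeff_sub, coeff_mul_X_pow', hRc,
      coeff_X_pow_mul', coeff_C_mul, hQc, hQc]
    rcases lt_or_ge n m with h | h
    · rw [if_pos h, if_neg (by omega : ¬ m ≤ n)]
      rcases le_or_gt j n with h2 | h2
      · rw [if_pos h2, if_pos h2, if_neg (by omega : ¬ n < j)]; try ring
      · rw [if_neg (by omega : ¬ j ≤ n), if_neg (by omega : ¬ j ≤ n), if_pos h2]; try ring
    · rw [if_neg (by omega : ¬ n < m), if_pos (by omega : m ≤ n),
        if_pos (by omega : j ≤ n), if_neg (by omega : ¬ n < j)]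
      rcases lt_or_ge (n - m) j with h3 | h3
      · rw [if_pos h3, show n - m + m - j = n - j by omega]; try ring
      · rw [if_neg (by omega : ¬ n - m < j), hP (n - j) (by omega)]; try ring
  have hRdeg : R.degree < (X ^ m - C c).degree := by
    rw [degree_X_pow_sub_C hm]
    refine degree_lt_iff_coeff_zero _ _ |>.2 fun n hn => ?_
    rw [hRc]
    rw [if_neg (by exact_mod_cast not_lt.2 (by exact_mod_cast hn))]
  have := Polynomial.modByMonic_eq_of_dvd_sub hmonic (p₁ := P * X ^ j) (p₂ := R) ⟨Q * 1, hid⟩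
  rw [this, (Polynomial.modByMonic_eq_self_iff hmonic).2 hRdeg, hRc, if_pos hk]

lemma core_sum {F : Type*} [Field F] (m j : ℕ) (hm : 0 < m) (hj : j < m) (lam : F)
    (hlam : lam ≠ 0) (A B : F[X]) (hA : ∀ i, m ≤ i → A.coeff i = 0)
    (hB : ∀ i, m ≤ i → B.coeff i = 0) :
    ∑ i ∈ range m, ((A * X ^ j) %ₘ (X ^ m - C lam)).coeff i * B.coeff i =
      ∑ i ∈ range m, A.coeff i * ((C lam * B * X ^ (m - j)) %ₘ (X ^ m - C lam⁻¹)).coeff i := by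
  have h1 : ∀ i ∈ range m, ((A * X ^ j) %ₘ (X ^ m - C lam)).coeff i * B.coeff i
      = (if j ≤ i then A.coeff (i - j) else lam * A.coeff (i + m - j)) * B.coeff i := by
    intro i hi
    rw [key m j hm hj.le lam A hA i (mem_range.1 hi)]
  have h2 : ∀ i ∈ range m, A.coeff i * ((C lam * B * X ^ (m - j)) %ₘ (X ^ m - C lam⁻¹)).coeff i
      = A.coeff i * (if m - j ≤ i then lam * B.coeff (i - (m - j)) else B.coeff (i + j)) := by
    intro i hi
    rw [key m (m - j) hm (by omega) lam⁻¹ (C lam * B)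
      (fun k hk => by rw [coeff_C_mul, hB k hk, mul_zero]) i (mem_range.1 hi)]
    simp only [coeff_C_mul]
    split_ifs with h
    · rfl
    · rw [show i + m - (m - j) = i + j by omega]
      field_simp
  rw [Finset.sum_congr rfl h1, Finset.sum_congr rfl h2]
  have split : ∀ (f : ℕ → F) (c : ℕ), c ≤ m →
      ∑ i ∈ range m, f i = ∑ i ∈ range c, f i + ∑ i ∈ Ico c m, f i := by
    intro f c hc
    rw [range_eq_Ico, ← Finset.sum_Ico_consecutive _ (Nat.zero_le c) hc]
    try rw [range_eq_Ico]
  have e1 : ∑ i ∈ Ico j m,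
        (if j ≤ i then A.coeff (i - j) else lam * A.coeff (i + m - j)) * B.coeff i
      = ∑ i ∈ range (m - j), A.coeff i * B.coeff (i + j) := by
    rw [Finset.sum_Ico_eq_sum_range]
    refine Finset.sum_congr rfl fun i hi => ?_
    rw [if_pos (by omega), show j + i - j = i by omega, show j + i = i + j by omega]
  have e2 : ∑ i ∈ range j,
        (if j ≤ i then A.coeff (i - j) else lam * A.coeff (i + m - j)) * B.coeff i
      = ∑ i ∈ Ico (m - j) m,
          A.coeff i * (if m - j ≤ i then lam * B.coeff (i - (m - j)) else B.coeff (i + j)) := by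
    rw [Finset.sum_Ico_eq_sum_range, show m - (m - j) = j by omega]
    refine Finset.sum_congr rfl fun i hi => ?_
    rw [mem_range] at hi
    rw [if_neg (by omega), if_pos (by omega), show m - j + i - (m - j) = i by omega,
      show m - j + i = i + m - j by omega]
    ring
  have e3 : ∑ i ∈ range (m - j),
        A.coeff i * (if m - j ≤ i then lam * B.coeff (i - (m - j)) else B.coeff (i + j))
      = ∑ i ∈ range (m - j), A.coeff i * B.coeff (i + j) :=
    Finset.sum_congr rfl fun i hi => by
      rw [mem_range] at hi; rw [if_neg (by omega)]
  rw [split _ j hj.le, split _ (m - j) (by omega), e1, e2, e3, add_comm]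


/-- With `R = F_q[x]/(x^m - λ)`, `R* = F_q[x]/(x^m - λ⁻¹)` and the Euclidean pairing
`⟨a,b⟩_e = Σ_{i<m} a_i b_i` of the canonical representatives (reductions mod the
respective moduli), for any `t` of degree ≤ m-1 one has
`⟨a t, b⟩_e = ⟨a, b t°⟩_e` where `t°(x) = λ x^m t(1/x)`. -/
theorem stmt4 {F : Type*} [Field F] [Fintype F] (m : ℕ) (hm : 0 < m) (lam : F)
    (hlam : lam ≠ 0) (t a b : F[X]) (ht : t.degree < (m : ℕ)) :
    ∑ i ∈ range m,
        ((a * t) %ₘ (X ^ m - C lam)).coeff i * (b %ₘ (X ^ m - C lam⁻¹)).coeff i =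
      ∑ i ∈ range m,
        (a %ₘ (X ^ m - C lam)).coeff i *
          ((b * (C lam * Polynomial.reflect m t)) %ₘ (X ^ m - C lam⁻¹)).coeff i := by
  set f : F[X] := X ^ m - C lam with hf
  set g : F[X] := X ^ m - C lam⁻¹ with hg
  have hfm : f.Monic := monic_X_pow_sub_C _ hm.ne'
  have hgm : g.Monic := monic_X_pow_sub_C _ hm.ne'
  set A := a %ₘ f with hA
  set B := b %ₘ g with hB
  have hdegcoeff : ∀ (p q : F[X]) (c : F), q = X ^ m - C c → q.Monic →
      ∀ i, m ≤ i → (p %ₘ q).coeff i = 0 := by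
    intro p q c hq hqm i hi
    apply coeff_eq_zero_of_degree_lt
    calc (p %ₘ q).degree < q.degree := degree_modByMonic_lt p hqm
      _ = (m : WithBot ℕ) := by rw [hq, degree_X_pow_sub_C hm]
      _ ≤ i := by exact_mod_cast hi
  have hAc : ∀ i, m ≤ i → A.coeff i = 0 := hdegcoeff a f lam hf hfm
  have hBc : ∀ i, m ≤ i → B.coeff i = 0 := hdegcoeff b g lam⁻¹ hg hgm
  have hsub : ∀ (p q : F[X]), q.Monic → p - p %ₘ q = q * (p /ₘ q) := fun p q h => by
    linear_combination - modByMonic_add_div p q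
  have hred1 : (a * t) %ₘ f = (A * t) %ₘ f :=
    modByMonic_eq_of_dvd_sub hfm ⟨(a /ₘ f) * t, by rw [← sub_mul, hsub a f hfm, mul_assoc]⟩
  have hred2 : (b * (C lam * reflect m t)) %ₘ g = (B * (C lam * reflect m t)) %ₘ g :=
    modByMonic_eq_of_dvd_sub hgm
      ⟨(b /ₘ g) * (C lam * reflect m t), by rw [← sub_mul, hsub b g hgm, mul_assoc]⟩
  rw [hred1, hred2]
  have hnt : t.natDegree < m := by
    rcases eq_or_ne t 0 with rfl | h
    · simpa using hm
    · exact (natDegree_lt_iff_degree_lt h).2 (by exact_mod_cast ht)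
  have htsum : t = ∑ j ∈ range m, C (t.coeff j) * X ^ j := by
    conv_lhs => rw [as_sum_range' t m hnt]
    exact Finset.sum_congr rfl fun j _ => C_mul_X_pow_eq_monomial.symm
  have hreflsum : reflect m t = ∑ j ∈ range m, C (t.coeff j) * X ^ (m - j) := by
    conv_lhs => rw [htsum]
    show (AddMonoidHom.mk' (fun p : F[X] => reflect m p) (fun x y => reflect_add x y m))
        (∑ j ∈ range m, C (t.coeff j) * X ^ j) = _
    rw [map_sum]
    refine Finset.sum_congr rfl fun j hj => ?_
    rw [mem_range] at hj
    show reflect m (C (t.coeff j) * X ^ j) = _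
    rw [reflect_C_mul_X_pow, revAt_le hj.le]
  have hAsum : A * t = ∑ j ∈ range m, C (t.coeff j) * (A * X ^ j) := by
    conv_lhs => rw [htsum]
    rw [Finset.mul_sum]
    exact Finset.sum_congr rfl fun j _ => by ring
  have hBsum : B * (C lam * reflect m t)
      = ∑ j ∈ range m, C (t.coeff j) * (C lam * B * X ^ (m - j)) := by
    rw [hreflsum, Finset.mul_sum, Finset.mul_sum]
    exact Finset.sum_congr rfl fun j _ => by ring
  have hmodsum : ∀ (q : F[X]) (p : ℕ → F[X]),
      (∑ j ∈ range m, p j) %ₘ q = ∑ j ∈ range m, p j %ₘ q := fun q p => by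
    have h := map_sum (modByMonicHom q) p (range m)
    simp only [modByMonicHom_apply] at h
    exact h
  have hCmod : ∀ (c : F) (p q : F[X]), (C c * p) %ₘ q = C c * (p %ₘ q) := fun c p q => by
    rw [← smul_eq_C_mul, ← smul_eq_C_mul, smul_modByMonic]
  rw [hAsum, hBsum, hmodsum, hmodsum]
  simp only [hCmod, finset_sum_coeff, coeff_C_mul, Finset.sum_mul, Finset.mul_sum]
  rw [Finset.sum_comm]
  conv_rhs => rw [Finset.sum_comm]
  refine Finset.sum_congr rfl fun j hj => ?_
  rw [mem_range] at hj
  have h3 : ∀ i ∈ range m,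
      A.coeff i * (t.coeff j * ((C lam * B * X ^ (m - j)) %ₘ g).coeff i)
        = t.coeff j * (A.coeff i * ((C lam * B * X ^ (m - j)) %ₘ g).coeff i) :=
    fun i _ => by ring
  have h4 : ∀ i ∈ range m,
      t.coeff j * ((A * X ^ j) %ₘ f).coeff i * B.coeff i
        = t.coeff j * (((A * X ^ j) %ₘ f).coeff i * B.coeff i) :=
    fun i _ => by ring
  rw [Finset.sum_congr rfl h3, Finset.sum_congr rfl h4, ← Finset.mul_sum, ← Finset.mul_sum]
  congr 1
  exact core_sum m j hm hj lam hlam A B hAc hBc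
end

section
/- Let C be the R-submodule of R² (R = F_q[x]/(x^m−λ)) generated by (g₁₁(x), g₁₂(x)) and (0, g₂₂(x)), where g₁₁, g₂₂ divide x^m − λ. If C is generated by a single element of R², then g₁₁(x) g₂₂(x) ≡ 0 (mod x^m − λ). -/
open Polynomial

theorem Prod.fst_mul_snd_eq_zero_of_mem_span_singleton {R : Type*} [CommSemiring R]
    {v : R × R} {a b d : R} (hab : (a, b) ∈ Submodule.span R {v})
    (hd : (0, d) ∈ Submodule.span R {v}) : a * d = 0 := by
  obtain ⟨r, hr⟩ := Submodule.mem_span_singleton.mp hab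
  obtain ⟨s, hs⟩ := Submodule.mem_span_singleton.mp hd
  have ha : r * v.1 = a := congrArg Prod.fst hr
  have hs1 : s * v.1 = 0 := congrArg Prod.fst hs
  have hs2 : s * v.2 = d := congrArg Prod.snd hs
  calc a * d = r * v.2 * (s * v.1) := by rw [← ha, ← hs2]; ring
    _ = 0 := by rw [hs1, mul_zero]

set_option synthInstance.maxHeartbeats 1000000 in
set_option maxHeartbeats 2000000 in
theorem stmt13_general {F : Type*} [Field F] (m : ℕ) (lam : F)
    (g11 g12 g22 : F[X])
    (mk : F[X] →+* F[X] ⧸ Ideal.span {X ^ m - C lam})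
    (hmk : mk = Ideal.Quotient.mk (Ideal.span {X ^ m - C lam}))
    (hone : ∃ v : (F[X] ⧸ Ideal.span {X ^ m - C lam}) × (F[X] ⧸ Ideal.span {X ^ m - C lam}),
      Submodule.span (F[X] ⧸ Ideal.span {X ^ m - C lam})
          ({(mk g11, mk g12), (0, mk g22)} :
            Set ((F[X] ⧸ Ideal.span {X ^ m - C lam}) × (F[X] ⧸ Ideal.span {X ^ m - C lam}))) =
        Submodule.span _ {v}) :
    (X ^ m - C lam) ∣ g11 * g22 := by
  obtain ⟨v, hv⟩ := hone
  have hmem : ∀ w ∈ ({(mk g11, mk g12), (0, mk g22)} : Set _),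
      w ∈ Submodule.span (F[X] ⧸ Ideal.span {X ^ m - C lam}) {v} :=
    fun w hw => hv ▸ Submodule.subset_span hw
  have hzero : mk (g11 * g22) = 0 := by
    rw [map_mul]
    exact Prod.fst_mul_snd_eq_zero_of_mem_span_singleton (b := mk g12)
      (hmem _ (by simp)) (hmem _ (by simp))
  rwa [hmk, Ideal.Quotient.eq_zero_iff_mem, Ideal.mem_span_singleton] at hzero

set_option synthInstance.maxHeartbeats 1000000 in
set_option maxHeartbeats 2000000 in
/-- Let `C ⊆ R²` (with `R = F_q[x]/(x^m - λ)`) be generated by `(g₁₁, g₁₂)` and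
`(0, g₂₂)`, with `g₁₁, g₂₂ ∣ x^m - λ`.  If `C` is generated by a single element,
then `g₁₁ g₂₂ ≡ 0 (mod x^m - λ)`. -/
theorem stmt13 {F : Type*} [Field F] [Fintype F] (m : ℕ) (hm : 0 < m) (lam : F)
    (hlam : lam ≠ 0) (g11 g12 g22 : F[X])
    (h11 : g11 ∣ X ^ m - C lam) (h22 : g22 ∣ X ^ m - C lam)
    (mk : F[X] →+* F[X] ⧸ Ideal.span {X ^ m - C lam})
    (hmk : mk = Ideal.Quotient.mk (Ideal.span {X ^ m - C lam}))
    (hone : ∃ v : (F[X] ⧸ Ideal.span {X ^ m - C lam}) × (F[X] ⧸ Ideal.span {X ^ m - C lam}),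
      Submodule.span (F[X] ⧸ Ideal.span {X ^ m - C lam})
          ({(mk g11, mk g12), (0, mk g22)} :
            Set ((F[X] ⧸ Ideal.span {X ^ m - C lam}) × (F[X] ⧸ Ideal.span {X ^ m - C lam}))) =
        Submodule.span _ {v}) :
    (X ^ m - C lam) ∣ g11 * g22 :=
  stmt13_general m lam g11 g12 g22 mk hmk hone
end

section
/- Let gcd(m,q)=1, R = F_q[x]/(x^m−λ), and let C ⊆ R² be generated by (g₁₁, g₁₂) and (0, g₂₂) with g₁₁, g₂₂ dividing x^m−λ, deg g₁₂ < deg g₂₂, and gcd(g₁₁, g₂₂) dividing g₁₂. If g₁₁(x) g₂₂(x) ≡ 0 (mod x^m − λ), then C is generated by a single element of R². -/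
/-!
Over a squarefree modulus `n` with `g₁₁ ∣ n ∣ g₁₁ g₂₂`, write `d = gcd(g₁₁, g₂₂)` and
`g₁₁ = d a`. Squarefreeness makes `a` coprime to `g₂₂` and forces `n ∣ a g₂₂`. Using a Bézout
relation for `a` and `g₂₂` one picks `r` with `G = g₁₂ + r g₂₂ ≡ 1 (mod a)`; since `d ∣ G`,
`G = d G'` with `G'` invertible modulo `a`, and `f = (g₂₂ / d) · G'⁻¹` kills `g₁₁` and sends `G`
to `g₂₂` modulo `a g₂₂`. Hence `(0, g₂₂)` is a multiple of `(g₁₁, G)`, which generates `C`.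
-/

open Polynomial

theorem Submodule.span_pair_eq_span_singleton_of_mul_eq {S : Type*} [CommRing S]
    {x₁₁ x₁₂ x₂₂ r f : S} (hf₁₁ : f * x₁₁ = 0) (hf₂₂ : f * (x₁₂ + r * x₂₂) = x₂₂) :
    span S {(x₁₁, x₁₂), (0, x₂₂)} = span S {(x₁₁, x₁₂ + r * x₂₂)} := by
  apply le_antisymm
  · rw [span_le, Set.insert_subset_iff, Set.singleton_subset_iff, SetLike.mem_coe,
      SetLike.mem_coe, mem_span_singleton, mem_span_singleton]
    refine ⟨⟨1 - r * f, ?_⟩, ⟨f, ?_⟩⟩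
    · ext
      · simp only [Prod.smul_mk, smul_eq_mul]; linear_combination (-r) * hf₁₁
      · simp only [Prod.smul_mk, smul_eq_mul]; linear_combination (-r) * hf₂₂
    · ext
      · exact hf₁₁
      · exact hf₂₂
  · rw [span_le, Set.singleton_subset_iff, SetLike.mem_coe, mem_span_pair]
    exact ⟨1, r, by ext <;> simp⟩

theorem Squarefree.dvd_mul_of_dvd_mul_mul {R : Type*} [CommMonoidWithZero R]
    [DecompositionMonoid R] {n d a y : R} (hn : Squarefree n) (hdvd : n ∣ d * a * y)
    (hd : d ∣ y) : n ∣ a * y := by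
  rw [← hn.dvd_pow_iff_dvd two_ne_zero]
  refine hdvd.trans ?_
  rw [sq, mul_comm d a]
  exact mul_dvd_mul (mul_dvd_mul_left a hd) (dvd_mul_left y a)

theorem exists_dvd_mul_and_dvd_mul_add_mul_sub_of_isCoprime {R : Type*} [CommRing R]
    {a d b g₁₂ : R} (hcop : IsCoprime a (d * b)) (hg₁₂ : d ∣ g₁₂) :
    ∃ r f : R, a * (d * b) ∣ f * (d * a) ∧ a * (d * b) ∣ f * (g₁₂ + r * (d * b)) - d * b := by
  obtain ⟨u, v, huv⟩ := hcop
  obtain ⟨c, rfl⟩ := hg₁₂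
  -- `G = d * (c + v * (1 - d * c) * b) = 1 - a * u * (1 - d * c)` is a unit modulo `a`
  have hG : IsCoprime a (c + v * (1 - d * c) * b) :=
    IsCoprime.of_mul_right_right (R := R) (y := d)
      ⟨u * (1 - d * c), 1, by linear_combination (1 - d * c) * huv⟩
  obtain ⟨p, q, hpq⟩ := hG
  refine ⟨v * (1 - d * c), b * q, ⟨q, by ring⟩, ⟨-p, ?_⟩⟩
  linear_combination d * b * hpq

section EuclideanDomain

variable {R : Type*} [EuclideanDomain R] [DecidableEq R]

theorem isCoprime_of_squarefree_of_eq_gcd_mul {x y a : R} (hx : Squarefree x)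
    (ha : x = EuclideanDomain.gcd x y * a) : IsCoprime a y := by
  rw [← EuclideanDomain.gcd_isUnit_iff]
  apply hx
  have hgcd : EuclideanDomain.gcd a y ∣ EuclideanDomain.gcd x y :=
    EuclideanDomain.dvd_gcd ((EuclideanDomain.gcd_dvd_left a y).trans (Dvd.intro_left _ ha.symm))
      (EuclideanDomain.gcd_dvd_right a y)
  rw [ha]
  exact mul_dvd_mul hgcd (EuclideanDomain.gcd_dvd_left a y)

theorem exists_dvd_mul_and_dvd_mul_add_mul_sub_of_squarefree {n g₁₁ g₁₂ g₂₂ : R}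
    (hn : Squarefree n) (h₁₁ : g₁₁ ∣ n) (hgcd : EuclideanDomain.gcd g₁₁ g₂₂ ∣ g₁₂)
    (hzero : n ∣ g₁₁ * g₂₂) : ∃ r f : R, n ∣ f * g₁₁ ∧ n ∣ f * (g₁₂ + r * g₂₂) - g₂₂ := by
  set d := EuclideanDomain.gcd g₁₁ g₂₂
  obtain ⟨a, ha⟩ : d ∣ g₁₁ := EuclideanDomain.gcd_dvd_left _ _
  obtain ⟨b, hb⟩ : d ∣ g₂₂ := EuclideanDomain.gcd_dvd_right _ _
  have hcop : IsCoprime a g₂₂ :=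
    isCoprime_of_squarefree_of_eq_gcd_mul (hn.squarefree_of_dvd h₁₁) ha
  have hn_dvd : n ∣ a * g₂₂ := hn.dvd_mul_of_dvd_mul_mul (ha ▸ hzero) ⟨b, hb⟩
  rw [hb] at hcop hn_dvd
  obtain ⟨r, f, hf₁₁, hf₂₂⟩ := exists_dvd_mul_and_dvd_mul_add_mul_sub_of_isCoprime hcop hgcd
  rw [ha, hb]
  exact ⟨r, f, hn_dvd.trans hf₁₁, hn_dvd.trans hf₂₂⟩

end EuclideanDomain

theorem FiniteField.isUnit_natCast_of_coprime_card {F : Type*} [Field F] [Fintype F] {m : ℕ}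
    (hm : m.Coprime (Fintype.card F)) : IsUnit (m : F) := by
  simpa [FiniteField.cast_card_eq_zero] using
    (Nat.isCoprime_iff_coprime.mpr hm).map (Int.castRingHom F)

theorem stmt14_general {F : Type*} [Field F] [Fintype F] [DecidableEq F] (m : ℕ)
    (hcop : Nat.Coprime m (Fintype.card F)) (lam : F) (hlam : lam ≠ 0)
    (g11 g12 g22 : F[X])
    (h11 : g11 ∣ X ^ m - C lam)
    (hgcd : EuclideanDomain.gcd g11 g22 ∣ g12)
    (hzero : (X ^ m - C lam) ∣ g11 * g22)
    (mk : F[X] →+* F[X] ⧸ Ideal.span {X ^ m - C lam})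
    (hmk : mk = Ideal.Quotient.mk (Ideal.span {X ^ m - C lam})) :
    ∃ v : (F[X] ⧸ Ideal.span {X ^ m - C lam}) × (F[X] ⧸ Ideal.span {X ^ m - C lam}),
      Submodule.span (F[X] ⧸ Ideal.span {X ^ m - C lam})
          ({(mk g11, mk g12), (0, mk g22)} :
            Set ((F[X] ⧸ Ideal.span {X ^ m - C lam}) × (F[X] ⧸ Ideal.span {X ^ m - C lam}))) =
        Submodule.span _ {v} := by
  have hsf : Squarefree (X ^ m - C lam) :=
    (separable_X_pow_sub_C lam (FiniteField.isUnit_natCast_of_coprime_card hcop).ne_zero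
      hlam).squarefree
  obtain ⟨r, f, hf₁₁, hf₂₂⟩ :=
    exists_dvd_mul_and_dvd_mul_add_mul_sub_of_squarefree hsf h11 hgcd hzero
  subst hmk
  refine ⟨_, Submodule.span_pair_eq_span_singleton_of_mul_eq (f := Ideal.Quotient.mk _ f)
    (r := Ideal.Quotient.mk _ r) ?_ ?_⟩
  · rw [← map_mul, Ideal.Quotient.eq_zero_iff_dvd]
    exact hf₁₁
  · rw [← map_mul, ← map_add, ← map_mul, Ideal.Quotient.mk_eq_mk_iff_sub_mem,
      Ideal.mem_span_singleton]
    exact hf₂₂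

set_option synthInstance.maxHeartbeats 1000000 in
set_option maxHeartbeats 2000000 in
/-- Suppose `gcd(m,q) = 1`, `g₁₁, g₂₂ ∣ x^m - λ`, `deg g₁₂ < deg g₂₂` and
`gcd(g₁₁,g₂₂) ∣ g₁₂`.  If `g₁₁ g₂₂ ≡ 0 (mod x^m - λ)`, then the submodule of `R²`
(`R = F_q[x]/(x^m-λ)`) generated by `(g₁₁, g₁₂)` and `(0, g₂₂)` is generated by a
single element. -/
theorem stmt14 {F : Type*} [Field F] [Fintype F] [DecidableEq F] (m : ℕ) (hm : 0 < m)
    (hcop : Nat.Coprime m (Fintype.card F)) (lam : F) (hlam : lam ≠ 0)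
    (g11 g12 g22 : F[X])
    (h11 : g11 ∣ X ^ m - C lam) (h22 : g22 ∣ X ^ m - C lam)
    (hdeg : g12.degree < g22.degree)
    (hgcd : EuclideanDomain.gcd g11 g22 ∣ g12)
    (hzero : (X ^ m - C lam) ∣ g11 * g22)
    (mk : F[X] →+* F[X] ⧸ Ideal.span {X ^ m - C lam})
    (hmk : mk = Ideal.Quotient.mk (Ideal.span {X ^ m - C lam})) :
    ∃ v : (F[X] ⧸ Ideal.span {X ^ m - C lam}) × (F[X] ⧸ Ideal.span {X ^ m - C lam}),
      Submodule.span (F[X] ⧸ Ideal.span {X ^ m - C lam})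
          ({(mk g11, mk g12), (0, mk g22)} :
            Set ((F[X] ⧸ Ideal.span {X ^ m - C lam}) × (F[X] ⧸ Ideal.span {X ^ m - C lam}))) =
        Submodule.span _ {v} :=
  stmt14_general m hcop lam hlam g11 g12 g22 h11 hgcd hzero mk hmk
end

section
/- Let q be even, l = 2r, and {w₁,...,w_l} an F_q-basis of F_{q^l} with Tr(w_i w_{r+i}^{q^r}) = Tr(w_{r+i} w_i^{q^r}) = 1 for 1 ≤ i ≤ r and Tr(w_i w_j^{q^r}) = 0 otherwise. For g(x) = Σ w_i g_i(x), f(x) = Σ w_i f_i(x) with g_i, f_i ∈ F_q[x] of degree ≤ m−1, one has Tr(⟨g(x), f̄(x)⟩_e) = Σ_{i=1}^r ⟨g_i, f_{r+i}⟩_e + Σ_{i=1}^r ⟨g_{r+i}, f_i⟩_e, where f̄ denotes coefficientwise application of α ↦ α^{q^r}. -/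
open Polynomial Finset

/-- Let `q` be even, `l = r + r`, and `{w₁,...,w_l}` an `F_q`-basis of `F_{q^l}` with
`Tr(w_i w_{r+i}^{q^r}) = Tr(w_{r+i} w_i^{q^r}) = 1` for `1 ≤ i ≤ r` and
`Tr(w_i w_j^{q^r}) = 0` otherwise.  For `g = Σ w_i g_i`, `f = Σ w_i f_i` with
`g_i, f_i ∈ F_q[x]` of degree ≤ m-1, one has
`Tr(⟨g, f̄⟩_e) = Σ_{i≤r} ⟨g_i, f_{r+i}⟩_e + Σ_{i≤r} ⟨g_{r+i}, f_i⟩_e`,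
where `f̄` is the coefficientwise application of `α ↦ α^{q^r}`. -/
theorem stmt16 {F K : Type*} [Field F] [Fintype F] [Field K] [Algebra F K]
    [FiniteDimensional F K] (r : ℕ) (hr : 0 < r) (hq : Even (Fintype.card F))
    (hrank : Module.finrank F K = r + r)
    (w : Fin (r + r) → K) (hw : LinearIndependent F w)
    (h1 : ∀ i : Fin r,
      Algebra.trace F K (w (Fin.castAdd r i) * w (Fin.natAdd r i) ^ Fintype.card F ^ r) = 1)
    (h2 : ∀ i : Fin r,
      Algebra.trace F K (w (Fin.natAdd r i) * w (Fin.castAdd r i) ^ Fintype.card F ^ r) = 1)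
    (h3 : ∀ i j : Fin (r + r), (j : ℕ) ≠ (i : ℕ) + r → (i : ℕ) ≠ (j : ℕ) + r →
      Algebra.trace F K (w i * w j ^ Fintype.card F ^ r) = 0)
    (m : ℕ) (G Fq : Fin (r + r) → F[X])
    (hG : ∀ i, (G i).degree < (m : ℕ)) (hFq : ∀ i, (Fq i).degree < (m : ℕ)) :
    Algebra.trace F K (∑ j ∈ range m,
        (∑ i, C (w i) * (G i).map (algebraMap F K)).coeff j *
          ((∑ i, C (w i) * (Fq i).map (algebraMap F K)).coeff j) ^ (Fintype.card F ^ r)) =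
      (∑ i : Fin r, ∑ j ∈ range m,
          (G (Fin.castAdd r i)).coeff j * (Fq (Fin.natAdd r i)).coeff j) +
        ∑ i : Fin r, ∑ j ∈ range m,
          (G (Fin.natAdd r i)).coeff j * (Fq (Fin.castAdd r i)).coeff j := by
  classical
  set q := Fintype.card F with hqdef
  -- characteristic setup
  haveI : Fact (Nat.Prime (ringChar F)) := ⟨CharP.char_is_prime F _⟩
  set p := ringChar F with hpdef
  obtain ⟨n, hpn, hcard⟩ := FiniteField.card F p
  haveI : CharP K p := charP_of_injective_algebraMap (algebraMap F K).injective p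
  haveI : ExpChar K p := ExpChar.prime hpn
  have hqr : q ^ r = p ^ ((n : ℕ) * r) := by rw [hqdef, hcard, ← pow_mul]
  set φ : K →+* K := iterateFrobenius K p ((n : ℕ) * r) with hφdef
  have hφ : ∀ x : K, φ x = x ^ q ^ r := by
    intro x; rw [hqr]; rfl
  have hfix : ∀ c : F, (algebraMap F K c) ^ q ^ r = algebraMap F K c := by
    intro c
    rw [← map_pow, FiniteField.pow_card_pow]
  -- abbreviations for coefficients
  set A : Fin (r + r) → ℕ → F := fun i j => (G i).coeff j with hA
  set B : Fin (r + r) → ℕ → F := fun i j => (Fq i).coeff j with hB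
  -- trace of basic products
  set T : Fin (r + r) → Fin (r + r) → F := fun i i' =>
    Algebra.trace F K (w i * w i' ^ q ^ r) with hT
  -- simplify the polynomial coefficients
  have key : (∑ j ∈ range m,
        (∑ i, C (w i) * (G i).map (algebraMap F K)).coeff j *
          ((∑ i, C (w i) * (Fq i).map (algebraMap F K)).coeff j) ^ (q ^ r))
      = ∑ j ∈ range m, ∑ i, ∑ i',
          (A i j * B i' j) • (w i * w i' ^ q ^ r) := by
    refine Finset.sum_congr rfl fun j _ => ?_
    rw [finset_sum_coeff, finset_sum_coeff]
    simp only [coeff_C_mul, coeff_map]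
    have hpow : (∑ i, w i * algebraMap F K ((Fq i).coeff j)) ^ q ^ r
        = ∑ i, w i ^ q ^ r * algebraMap F K ((Fq i).coeff j) := by
      rw [← hφ, map_sum]
      refine Finset.sum_congr rfl fun i _ => ?_
      rw [map_mul, hφ, hφ, hfix]
    rw [hpow, Finset.sum_mul_sum]
    refine Finset.sum_congr rfl fun i _ => Finset.sum_congr rfl fun i' _ => ?_
    rw [Algebra.smul_def, map_mul]
    ring
  rw [key]
  rw [map_sum]
  simp only [map_sum, map_smul]
  -- now goal in terms of T
  have step : ∀ j, (∑ i, ∑ i', (A i j * B i' j) • Algebra.trace F K (w i * w i' ^ q ^ r))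
      = (∑ i : Fin r, A (Fin.castAdd r i) j * B (Fin.natAdd r i) j)
        + ∑ i : Fin r, A (Fin.natAdd r i) j * B (Fin.castAdd r i) j := by
    intro j
    rw [Fin.sum_univ_add]
    congr 1
    · refine Finset.sum_congr rfl fun i _ => ?_
      rw [Fin.sum_univ_add]
      have hz : ∀ i' : Fin r,
          (A (Fin.castAdd r i) j * B (Fin.castAdd r i') j) •
            Algebra.trace F K (w (Fin.castAdd r i) * w (Fin.castAdd r i') ^ q ^ r) = 0 := by
        intro i'
        rw [h3] <;> simp [Fin.coe_castAdd] <;> omega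
      rw [Finset.sum_congr rfl fun i' _ => hz i', Finset.sum_const_zero, zero_add]
      rw [Finset.sum_eq_single i]
      · rw [h1, smul_eq_mul, mul_one]
      · intro i' _ hne
        rw [h3, smul_zero]
        · simp only [Fin.coe_natAdd, Fin.coe_castAdd]
          omega
        · simp only [Fin.coe_natAdd, Fin.coe_castAdd]
          have := Fin.val_ne_of_ne hne
          omega
      · intro h; exact absurd (Finset.mem_univ i) h
    · refine Finset.sum_congr rfl fun i _ => ?_
      rw [Fin.sum_univ_add]
      have hz : ∀ i' : Fin r,
          (A (Fin.natAdd r i) j * B (Fin.natAdd r i') j) •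
            Algebra.trace F K (w (Fin.natAdd r i) * w (Fin.natAdd r i') ^ q ^ r) = 0 := by
        intro i'
        rw [h3, smul_zero] <;> simp only [Fin.coe_natAdd] <;> omega
      rw [Finset.sum_congr rfl fun i' _ => hz i']
      rw [Finset.sum_const_zero, add_zero]
      rw [Finset.sum_eq_single i]
      · rw [h2, smul_eq_mul, mul_one]
      · intro i' _ hne
        rw [h3, smul_zero]
        · simp only [Fin.coe_natAdd, Fin.coe_castAdd]
          have := Fin.val_ne_of_ne hne
          omega
        · simp only [Fin.coe_natAdd, Fin.coe_castAdd]
          omega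
      · intro h; exact absurd (Finset.mem_univ i) h
  rw [Finset.sum_congr rfl fun j _ => step j, Finset.sum_add_distrib]
  congr 1 <;> exact Finset.sum_comm
end

section
/- Let R = F_q[x]/(x^m − λ) with λ ∈ {1, −1} and let C ⊆ R² be generated by g₁ = (g₁₁(x), g₁₂(x)) and g₂ = (0, g₂₂(x)), where g₁₁, g₂₂ divide x^m − λ. Define the symplectic product ⟨(a,b),(a′,b′)⟩_s = ⟨a,b′⟩_e − ⟨b,a′⟩_e with ⟨·,·⟩_e the coefficientwise Euclidean product on representatives of degree < m. Then ⟨u, v⟩_s = 0 for all u, v ∈ C if and only if (1) g₁₁(x) g₂₂*(x) ≡ 0 (mod x^m − λ) and (2) x^{deg g₁₁} g₁₁(x) g₁₂*(x) − x^{deg g₁₂} g₁₂(x) g₁₁*(x) ≡ 0 (mod x^m − λ). -/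
open Polynomial Finset

namespace Stmt19

variable {F : Type*} [Field F]

/-- coefficient of a mod (X^m - C lam) -/
theorem modCoeff {m : ℕ} (hm : 0 < m) (lam : F) (h : F[X]) (hh : h.natDegree < m + m)
    {i : ℕ} (hi : i < m) :
    (h %ₘ (X ^ m - C lam)).coeff i = h.coeff i + lam * h.coeff (i + m) := by
  have hP : (X ^ m - C lam).Monic := monic_X_pow_sub_C lam hm.ne'
  have hPd : (X ^ m - C lam).natDegree = m := natDegree_X_pow_sub_C
  set q := h /ₘ (X ^ m - C lam) with hq
  have hqd : q.natDegree < m := by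
    rw [hq, natDegree_divByMonic h hP, hPd]; omega
  have e1 : h %ₘ (X ^ m - C lam) = h - (X ^ m - C lam) * q :=
    modByMonic_eq_sub_mul_div h (X ^ m - C lam)
  have hcq : ∀ j, ((X ^ m - C lam) * q).coeff j
      = (if m ≤ j then q.coeff (j - m) else 0) - lam * q.coeff j := by
    intro j
    rw [sub_mul, coeff_sub, coeff_X_pow_mul', coeff_C_mul]
  have h2 : h.coeff (i + m) = q.coeff i := by
    have hdm : (h %ₘ (X ^ m - C lam)).coeff (i + m) = 0 := by
      refine coeff_eq_zero_of_degree_lt ?_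
      refine lt_of_lt_of_le (degree_modByMonic_lt h hP) ?_
      rw [degree_X_pow_sub_C hm]
      exact_mod_cast Nat.le_add_left m i
    have := modByMonic_add_div h (X ^ m - C lam)
    have h3 : h.coeff (i + m) = (h %ₘ (X ^ m - C lam)).coeff (i+m)
        + ((X ^ m - C lam) * q).coeff (i+m) := by
      conv_lhs => rw [← this]
      rw [coeff_add]
    rw [h3, hdm, hcq, if_pos (by omega), Nat.add_sub_cancel,
      show q.coeff (i + m) = 0 from coeff_eq_zero_of_natDegree_lt (by omega)]
    ring
  rw [e1, coeff_sub, hcq, if_neg (by omega), h2]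
  ring


theorem natDeg_mod_lt {m : ℕ} (hm : 0 < m) (lam : F) (a : F[X]) :
    (a %ₘ (X ^ m - C lam)).natDegree < m := by
  have hP : (X ^ m - C lam).Monic := monic_X_pow_sub_C lam hm.ne'
  rcases eq_or_ne (a %ₘ (X ^ m - C lam)) 0 with h | h
  · rw [h]; simpa using hm
  · refine (natDegree_lt_iff_degree_lt h).2 ?_
    rw [← degree_X_pow_sub_C hm lam]
    exact degree_modByMonic_lt a hP

theorem mod_self_eq {m : ℕ} (hm : 0 < m) (lam : F) (a : F[X]) :
    (a %ₘ (X ^ m - C lam)) %ₘ (X ^ m - C lam) = a %ₘ (X ^ m - C lam) := by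
  have hP : (X ^ m - C lam).Monic := monic_X_pow_sub_C lam hm.ne'
  exact (modByMonic_eq_self_iff hP).2 (degree_modByMonic_lt a hP)

theorem mod_congr {m : ℕ} (hm : 0 < m) (lam : F) {a b : F[X]}
    (h : (X ^ m - C lam) ∣ a - b) :
    a %ₘ (X ^ m - C lam) = b %ₘ (X ^ m - C lam) := by
  have hP : (X ^ m - C lam).Monic := monic_X_pow_sub_C lam hm.ne'
  have h0 : (a - b) %ₘ (X ^ m - C lam) = 0 := (modByMonic_eq_zero_iff_dvd hP).2 h
  rw [sub_modByMonic] at h0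
  exact sub_eq_zero.1 h0

theorem mod_mod_dvd {m : ℕ} (hm : 0 < m) (lam : F) (a : F[X]) :
    (X ^ m - C lam) ∣ a - a %ₘ (X ^ m - C lam) := by
  have hP : (X ^ m - C lam).Monic := monic_X_pow_sub_C lam hm.ne'
  exact ⟨a /ₘ (X ^ m - C lam), by linear_combination (modByMonic_add_div a (X ^ m - C lam)).symm⟩

theorem shiftCoeff {m : ℕ} (hm : 0 < m) (lam : F) {b : F[X]} (hb : b.natDegree < m)
    {c : ℕ} (hc : c ≤ m) {i : ℕ} (hi : i < m) :
    ((X ^ c * b) %ₘ (X ^ m - C lam)).coeff i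
      = if c ≤ i then b.coeff (i - c) else lam * b.coeff (i + m - c) := by
  have hd : (X ^ c * b).natDegree < m + m := by
    refine lt_of_le_of_lt (natDegree_mul_le) ?_
    rw [natDegree_X_pow]; omega
  rw [modCoeff hm lam _ hd hi, coeff_X_pow_mul', coeff_X_pow_mul']
  by_cases h : c ≤ i
  · rw [if_pos h, if_pos (show c ≤ i + m by omega), if_pos h,
      show b.coeff (i + m - c) = 0 from coeff_eq_zero_of_natDegree_lt (by omega)]
    ring
  · rw [if_neg h, if_pos (show c ≤ i + m by omega), if_neg h]
    ring

/-- the Euclidean pairing -/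
noncomputable def ee (m : ℕ) (lam : F) (a b : F[X]) : F :=
  ∑ i ∈ range m, (a %ₘ (X ^ m - C lam)).coeff i * (b %ₘ (X ^ m - C lam)).coeff i

theorem ee_comm (m : ℕ) (lam : F) (a b : F[X]) : ee m lam a b = ee m lam b a := by
  unfold ee; exact Finset.sum_congr rfl fun i _ => mul_comm _ _

theorem ee_zero_right (m : ℕ) (lam : F) (a : F[X]) : ee m lam a 0 = 0 := by
  unfold ee; simp [zero_modByMonic]

theorem ee_add_right (m : ℕ) (lam : F) (a b c : F[X]) :
    ee m lam a (b + c) = ee m lam a b + ee m lam a c := by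
  unfold ee
  rw [← Finset.sum_add_distrib]
  refine Finset.sum_congr rfl fun i _ => ?_
  rw [add_modByMonic, coeff_add]; ring

theorem ee_Cmul_right (m : ℕ) (lam : F) (c : F) (a b : F[X]) :
    ee m lam a (C c * b) = c * ee m lam a b := by
  unfold ee
  rw [Finset.mul_sum]
  refine Finset.sum_congr rfl fun i _ => ?_
  rw [← smul_eq_C_mul, smul_modByMonic, coeff_smul, smul_eq_mul]; ring

theorem ee_neg_right (m : ℕ) (lam : F) (a b : F[X]) :
    ee m lam a (-b) = -ee m lam a b := by
  have := ee_Cmul_right m lam (-1) a b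
  simpa using this

theorem ee_add_left (m : ℕ) (lam : F) (a b c : F[X]) :
    ee m lam (a + b) c = ee m lam a c + ee m lam b c := by
  rw [ee_comm, ee_add_right, ee_comm m lam c, ee_comm m lam c]

theorem ee_Cmul_left (m : ℕ) (lam : F) (c : F) (a b : F[X]) :
    ee m lam (C c * a) b = c * ee m lam a b := by
  rw [ee_comm, ee_Cmul_right, ee_comm]

theorem ee_congr_right {m : ℕ} (hm : 0 < m) (lam : F) (a : F[X]) {b b' : F[X]}
    (h : (X ^ m - C lam) ∣ b - b') : ee m lam a b = ee m lam a b' := by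
  unfold ee; rw [mod_congr hm lam h]

theorem ee_congr_left {m : ℕ} (hm : 0 < m) (lam : F) {a a' : F[X]} (b : F[X])
    (h : (X ^ m - C lam) ∣ a - a') : ee m lam a b = ee m lam a' b := by
  unfold ee; rw [mod_congr hm lam h]


theorem ee_mulX {m : ℕ} (hm : 0 < m) {lam : F} (hl : lam * lam = 1) (u v : F[X]) :
    ee m lam (X * u) (X * v) = ee m lam u v := by
  set u' := u %ₘ (X ^ m - C lam) with hu'
  set v' := v %ₘ (X ^ m - C lam) with hv'
  have hu'd : u'.natDegree < m := natDeg_mod_lt hm lam u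
  have hv'd : v'.natDegree < m := natDeg_mod_lt hm lam v
  have h1 : ee m lam (X * u) (X * v) = ee m lam (X ^ 1 * u') (X ^ 1 * v') := by
    rw [ee_congr_left hm lam _ (show (X ^ m - C lam) ∣ X * u - X ^ 1 * u' from by
      obtain ⟨q, hq⟩ := mod_mod_dvd hm lam u
      exact ⟨X * q, by rw [pow_one]; linear_combination X * hq⟩)]
    rw [ee_congr_right hm lam _ (show (X ^ m - C lam) ∣ X * v - X ^ 1 * v' from by
      obtain ⟨q, hq⟩ := mod_mod_dvd hm lam v
      exact ⟨X * q, by rw [pow_one]; linear_combination X * hq⟩)]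
  have h2 : ee m lam u v = ∑ i ∈ range m, u'.coeff i * v'.coeff i := by
    unfold ee; rw [← hu', ← hv']
  rw [h1, h2]
  unfold ee
  obtain ⟨n, rfl⟩ : ∃ n, m = n + 1 := ⟨m - 1, by omega⟩
  rw [Finset.sum_range_succ' (fun i => ((X ^ 1 * u') %ₘ (X ^ (n+1) - C lam)).coeff i *
      ((X ^ 1 * v') %ₘ (X ^ (n+1) - C lam)).coeff i), Finset.sum_range_succ]
  have hc : ∀ (w : F[X]), w.natDegree < n + 1 → ∀ i : ℕ, i < n + 1 →
      ((X ^ 1 * w) %ₘ (X ^ (n+1) - C lam)).coeff i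
        = if 1 ≤ i then w.coeff (i - 1) else lam * w.coeff (i + (n+1) - 1) := by
    intro w hw i hi
    exact shiftCoeff hm lam hw (by omega) hi
  rw [hc u' hu'd 0 (by omega), hc v' hv'd 0 (by omega)]
  simp only [if_neg (by omega : ¬ (1:ℕ) ≤ 0)]
  have hlast : lam * u'.coeff (0 + (n+1) - 1) * (lam * v'.coeff (0 + (n+1) - 1))
      = u'.coeff n * v'.coeff n := by
    have : 0 + (n+1) - 1 = n := by omega
    rw [this]; linear_combination (u'.coeff n * v'.coeff n) * hl
  rw [hlast]
  congr 1
  refine Finset.sum_congr rfl fun i hif => ?_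
  have hi : i < n := Finset.mem_range.1 hif
  rw [hc u' hu'd (i+1) (by omega), hc v' hv'd (i+1) (by omega),
    if_pos (by omega : 1 ≤ i + 1)]
  simp

theorem ee_periodic {m : ℕ} (hm : 0 < m) (lam : F) (u v : F[X]) (j : ℕ) :
    ee m lam u (X ^ (j + m) * v) = lam * ee m lam u (X ^ j * v) := by
  have h1 : (X ^ m - C lam) ∣ X ^ (j + m) * v - C lam * (X ^ j * v) :=
    ⟨X ^ j * v, by rw [pow_add]; ring⟩
  rw [ee_congr_right hm lam u h1, ee_Cmul_right]

theorem ee_mulX_left {m : ℕ} (hm : 0 < m) {lam : F} (hl : lam * lam = 1) (u v : F[X]) :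
    ee m lam (X * u) v = lam * ee m lam u (X ^ (m - 1) * v) := by
  have hXm : (X : F[X]) ^ m = X * X ^ (m - 1) := by
    rw [← pow_succ']; congr 1; omega
  have h1 : ee m lam (X * u) (X ^ m * v) = lam * ee m lam (X * u) v := by
    have := ee_periodic hm lam (X * u) v 0
    simpa using this
  have h2 : ee m lam (X * u) (X ^ m * v) = ee m lam u (X ^ (m - 1) * v) := by
    rw [hXm, mul_assoc]
    exact ee_mulX hm hl u (X ^ (m-1) * v)
  calc ee m lam (X * u) v = (lam * lam) * ee m lam (X * u) v := by rw [hl]; ring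
    _ = lam * (lam * ee m lam (X * u) v) := by ring
    _ = lam * ee m lam u (X ^ (m - 1) * v) := by rw [← h1, h2]

theorem ee_Xpow_left {m : ℕ} (hm : 0 < m) {lam : F} (hl : lam * lam = 1) (i : ℕ)
    (u v : F[X]) :
    ee m lam (X ^ i * u) v = lam ^ i * ee m lam u (X ^ ((m - 1) * i) * v) := by
  induction i generalizing u v with
  | zero => simp
  | succ i ih =>
    have h1 : (X : F[X]) ^ (i+1) * u = X ^ i * (X * u) := by
      rw [pow_succ]; ring
    rw [h1, ih (X * u) v, ee_mulX_left hm hl]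
    have h2 : (X : F[X]) ^ (m-1) * (X ^ ((m-1) * i) * v) = X ^ ((m-1) * (i+1)) * v := by
      rw [← mul_assoc, ← pow_add]
      congr 2
      ring
    rw [h2]
    ring


theorem natDegree_reflect_le {m : ℕ} {b : F[X]} (hb : b.natDegree < m) :
    (reflect (m - 1) b).natDegree ≤ m - 1 := by
  refine natDegree_le_iff_coeff_eq_zero.2 fun N hN => ?_
  rw [coeff_reflect, revAt_eq_self_of_lt hN]
  exact coeff_eq_zero_of_natDegree_lt (by omega)

theorem coreL {m : ℕ} (hm : 0 < m) {lam : F} (hl : lam * lam = 1)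
    {a b : F[X]} (ha : a.natDegree < m) (hb : b.natDegree < m) {k : ℕ} (hk : k < m) :
    ee m lam a (X ^ (k + 1) * b)
      = lam * ((a * reflect (m - 1) b) %ₘ (X ^ m - C lam)).coeff k := by
  have hP : (X ^ m - C lam).Monic := monic_X_pow_sub_C lam hm.ne'
  set h := a * reflect (m - 1) b with hh
  have hrd : (reflect (m - 1) b).natDegree ≤ m - 1 := natDegree_reflect_le hb
  have hhd : h.natDegree < m + m := by
    refine lt_of_le_of_lt natDegree_mul_le ?_
    omega
  -- coefficients of h
  have hcoeff : ∀ n : ℕ, h.coeff n = ∑ i ∈ range (n + 1),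
      a.coeff i * b.coeff (revAt (m - 1) (n - i)) := by
    intro n
    rw [hh, coeff_mul, Finset.Nat.sum_antidiagonal_eq_sum_range_succ_mk]
    exact Finset.sum_congr rfl fun i _ => by rw [coeff_reflect]
  -- claim 1 : coefficient k+m
  have claim1 : h.coeff (k + m)
      = ∑ i ∈ range m, a.coeff i * (if k + 1 ≤ i then b.coeff (i - (k+1)) else 0) := by
    rw [hcoeff]
    rw [← Finset.sum_subset (Finset.range_subset_range.2 (show m ≤ k + m + 1 by omega))
      (fun i _ hi => by
        rw [coeff_eq_zero_of_natDegree_lt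
          (show a.natDegree < i by have := Finset.mem_range.not.1 hi; omega), zero_mul])]
    refine Finset.sum_congr rfl fun i hif => ?_
    have hi : i < m := Finset.mem_range.1 hif
    by_cases hik : k + 1 ≤ i
    · rw [if_pos hik, revAt_le (show k + m - i ≤ m - 1 by omega)]
      congr 2
      omega
    · rw [if_neg hik, revAt_eq_self_of_lt (show m - 1 < k + m - i by omega),
        coeff_eq_zero_of_natDegree_lt (show b.natDegree < k + m - i by omega), mul_zero]
  -- claim 2 : coefficient k
  have claim2 : h.coeff k
      = ∑ i ∈ range m, a.coeff i * b.coeff (i + m - (k + 1)) := by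
    rw [hcoeff]
    rw [← Finset.sum_subset (Finset.range_subset_range.2 (show k + 1 ≤ m by omega))
      (fun i _ hi => by
        rw [coeff_eq_zero_of_natDegree_lt
          (show b.natDegree < i + m - (k+1) by have := Finset.mem_range.not.1 hi; omega),
          mul_zero])]
    refine Finset.sum_congr rfl fun i hif => ?_
    have hi : i < k + 1 := Finset.mem_range.1 hif
    rw [revAt_le (show k - i ≤ m - 1 by omega)]
    congr 2
    omega
  -- left side
  have hmoda : a %ₘ (X ^ m - C lam) = a :=
    (modByMonic_eq_self_iff hP).2 (by
      rw [degree_X_pow_sub_C hm]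
      exact lt_of_le_of_lt degree_le_natDegree (by exact_mod_cast ha))
  have step1 : ∑ i ∈ range m, a.coeff i * ((X ^ (k+1) * b) %ₘ (X ^ m - C lam)).coeff i
      = (∑ i ∈ range m, a.coeff i * (if k+1 ≤ i then b.coeff (i - (k+1)) else 0))
        + lam * ∑ i ∈ range m, a.coeff i * b.coeff (i + m - (k+1)) := by
    rw [Finset.mul_sum, ← Finset.sum_add_distrib]
    refine Finset.sum_congr rfl fun i hif => ?_
    have hi : i < m := Finset.mem_range.1 hif
    rw [shiftCoeff hm lam hb (by omega) hi]
    by_cases hik : k + 1 ≤ i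
    · rw [if_pos hik, if_pos hik,
        show b.coeff (i + m - (k+1)) = 0 from
          coeff_eq_zero_of_natDegree_lt (by omega)]
      ring
    · rw [if_neg hik, if_neg hik]
      ring
  unfold ee
  rw [hmoda, step1, ← claim1, ← claim2, modCoeff hm lam h hhd hk]
  linear_combination (-(h.coeff (k + m))) * hl


theorem lam_ne_zero {lam : F} (hl : lam * lam = 1) : lam ≠ 0 := by
  intro h; rw [h, mul_zero] at hl; exact zero_ne_one hl

/-- main lemma, reduced version -/
theorem mainRed {m : ℕ} (hm : 0 < m) {lam : F} (hl : lam * lam = 1)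
    {a b c d : F[X]} (ha : a.natDegree < m) (hb : b.natDegree < m)
    (hc : c.natDegree < m) (hd : d.natDegree < m) :
    (∀ r t : F[X], ee m lam (r * a) (t * b) + ee m lam (r * c) (t * d) = 0) ↔
      (X ^ m - C lam) ∣ (a * reflect (m - 1) b + c * reflect (m - 1) d) := by
  have hP : (X ^ m - C lam).Monic := monic_X_pow_sub_C lam hm.ne'
  have hl0 : lam ≠ 0 := lam_ne_zero hl
  set A := a * reflect (m - 1) b with hA
  set B := c * reflect (m - 1) d with hB
  constructor
  · intro H
    rw [← modByMonic_eq_zero_iff_dvd hP]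
    have hco : ∀ k, k < m → ((A + B) %ₘ (X ^ m - C lam)).coeff k = 0 := by
      intro k hk
      have h1 := H 1 (X ^ (k+1))
      rw [one_mul, one_mul] at h1
      rw [coreL hm hl ha hb hk, coreL hm hl hc hd hk] at h1
      have h2 : lam * ((A + B) %ₘ (X ^ m - C lam)).coeff k = 0 := by
        rw [add_modByMonic, coeff_add]
        linear_combination h1
      exact (mul_eq_zero.1 h2).resolve_left hl0
    ext n
    rcases lt_or_ge n m with hn | hn
    · simpa using hco n hn
    · simp only [coeff_zero]
      refine coeff_eq_zero_of_degree_lt ?_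
      refine lt_of_lt_of_le (degree_modByMonic_lt _ hP) ?_
      rw [degree_X_pow_sub_C hm]
      exact_mod_cast hn
  · intro hdvd
    have hmod : (A + B) %ₘ (X ^ m - C lam) = 0 := (modByMonic_eq_zero_iff_dvd hP).2 hdvd
    have h0 : ∀ k, k < m → ee m lam a (X ^ (k+1) * b) + ee m lam c (X ^ (k+1) * d) = 0 := by
      intro k hk
      rw [coreL hm hl ha hb hk, coreL hm hl hc hd hk, ← mul_add,
        show (A %ₘ (X ^ m - C lam)).coeff k + (B %ₘ (X ^ m - C lam)).coeff k
          = ((A + B) %ₘ (X ^ m - C lam)).coeff k from by rw [add_modByMonic, coeff_add],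
        hmod]
      simp
    have key : ∀ k : ℕ, ee m lam a (X ^ (k+1) * b) + ee m lam c (X ^ (k+1) * d) = 0 := by
      intro k
      induction k using Nat.strong_induction_on with
      | _ k ih =>
        rcases lt_or_ge k m with hk | hk
        · exact h0 k hk
        · have e1 : (X : F[X]) ^ (k+1) * b = X ^ ((k - m + 1) + m) * b := by
            congr 2; omega
          have e2 : (X : F[X]) ^ (k+1) * d = X ^ ((k - m + 1) + m) * d := by
            congr 2; omega
          rw [e1, e2, ee_periodic hm lam a b (k - m + 1), ee_periodic hm lam c d (k - m + 1)]
          have := ih (k - m) (by omega)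
          linear_combination lam * this
    have key0 : ee m lam a (X ^ 0 * b) + ee m lam c (X ^ 0 * d) = 0 := by
      have h1 : lam * (ee m lam a (X ^ 0 * b) + ee m lam c (X ^ 0 * d)) = 0 := by
        rw [mul_add, ← ee_periodic hm lam a b 0, ← ee_periodic hm lam c d 0]
        have e1 : (X : F[X]) ^ (0 + m) * b = X ^ ((m-1)+1) * b := by congr 2; omega
        have e2 : (X : F[X]) ^ (0 + m) * d = X ^ ((m-1)+1) * d := by congr 2; omega
        rw [e1, e2]
        exact key (m - 1)
      rcases mul_eq_zero.1 h1 with h | h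
      · exact absurd h hl0
      · exact h
    have keyAll : ∀ k : ℕ, ee m lam a (X ^ k * b) + ee m lam c (X ^ k * d) = 0 := by
      intro k
      cases k with
      | zero => exact key0
      | succ n => exact key n
    have hT : ∀ t : F[X], ee m lam a (t * b) + ee m lam c (t * d) = 0 := by
      intro t
      induction t using Polynomial.induction_on' with
      | add p q hp hq =>
        rw [add_mul, add_mul, ee_add_right, ee_add_right]
        linear_combination hp + hq
      | monomial n cc =>
        rw [← C_mul_X_pow_eq_monomial, mul_assoc, mul_assoc, ee_Cmul_right, ee_Cmul_right]
        linear_combination cc * keyAll n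
    intro r t
    induction r using Polynomial.induction_on' with
    | add p q hp hq =>
      rw [add_mul, add_mul, ee_add_left, ee_add_left]
      linear_combination hp + hq
    | monomial n cc =>
      rw [← C_mul_X_pow_eq_monomial, mul_assoc, mul_assoc, ee_Cmul_left, ee_Cmul_left,
        ee_Xpow_left hm hl, ee_Xpow_left hm hl,
        show (X : F[X]) ^ ((m-1) * n) * (t * b) = ((X ^ ((m-1)*n)) * t) * b from by ring,
        show (X : F[X]) ^ ((m-1) * n) * (t * d) = ((X ^ ((m-1)*n)) * t) * d from by ring]
      linear_combination (cc * lam ^ n) * hT ((X ^ ((m-1)*n)) * t)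


theorem ee_mul_mod {m : ℕ} (hm : 0 < m) (lam : F) (r t a b : F[X]) :
    ee m lam (r * a) (t * b)
      = ee m lam (r * (a %ₘ (X ^ m - C lam))) (t * (b %ₘ (X ^ m - C lam))) := by
  obtain ⟨qa, hqa⟩ := mod_mod_dvd hm lam a
  obtain ⟨qb, hqb⟩ := mod_mod_dvd hm lam b
  rw [ee_congr_left hm lam _ (show (X ^ m - C lam) ∣ r * a - r * (a %ₘ (X ^ m - C lam))
    from ⟨r * qa, by linear_combination r * hqa⟩)]
  rw [ee_congr_right hm lam _ (show (X ^ m - C lam) ∣ t * b - t * (b %ₘ (X ^ m - C lam))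
    from ⟨t * qb, by linear_combination t * hqb⟩)]

/-- main lemma -/
theorem main {m : ℕ} (hm : 0 < m) {lam : F} (hl : lam * lam = 1) (a b c d : F[X]) :
    (∀ r t : F[X], ee m lam (r * a) (t * b) + ee m lam (r * c) (t * d) = 0) ↔
      (X ^ m - C lam) ∣ ((a %ₘ (X ^ m - C lam)) * reflect (m - 1) (b %ₘ (X ^ m - C lam))
        + (c %ₘ (X ^ m - C lam)) * reflect (m - 1) (d %ₘ (X ^ m - C lam))) := by
  rw [← mainRed hm hl (natDeg_mod_lt hm lam a) (natDeg_mod_lt hm lam b)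
    (natDeg_mod_lt hm lam c) (natDeg_mod_lt hm lam d)]
  constructor <;> intro H r t
  · rw [← ee_mul_mod hm lam r t a b, ← ee_mul_mod hm lam r t c d]; exact H r t
  · rw [ee_mul_mod hm lam r t a b, ee_mul_mod hm lam r t c d]; exact H r t


section Quot

variable (m : ℕ) (lam : F)

/-- quotient map -/
noncomputable def qmk : F[X] →+* (F[X] ⧸ Ideal.span {(X ^ m - C lam : F[X])}) :=
  Ideal.Quotient.mk _

theorem qmk_eq_zero_iff (v : F[X]) : qmk m lam v = 0 ↔ (X ^ m - C lam) ∣ v :=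
  Ideal.Quotient.eq_zero_iff_dvd _ _

theorem qmk_congr {v w : F[X]} (h : (X ^ m - C lam) ∣ v - w) : qmk m lam v = qmk m lam w := by
  have := (qmk_eq_zero_iff m lam (v - w)).2 h
  rw [map_sub] at this
  linear_combination this

/-- the inverse of X in the quotient -/
noncomputable def xinv : F[X] ⧸ Ideal.span {(X ^ m - C lam : F[X])} :=
  qmk m lam (C lam * X ^ (m - 1))

theorem qmk_X_mul_xinv (hm : 0 < m) {lam : F} (hl : lam * lam = 1) :
    qmk m lam X * xinv m lam = 1 := by
  rw [xinv, ← map_mul]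
  have h1 : (X : F[X]) * (C lam * X ^ (m-1)) = C lam * X ^ m := by
    rw [show (X:F[X]) ^ m = X * X ^ (m-1) from by rw [← pow_succ']; congr 1; omega]
    ring
  have h2 : qmk m lam (C lam * X ^ m) = qmk m lam (C (lam * lam)) := by
    refine qmk_congr m lam ⟨C lam, ?_⟩
    rw [C_mul]
    ring
  rw [h1, h2, hl, C_1, map_one]

theorem isUnit_qmk_X (hm : 0 < m) {lam : F} (hl : lam * lam = 1) :
    IsUnit (qmk m lam X) :=
  IsUnit.of_mul_eq_one _ (qmk_X_mul_xinv m hm hl)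

/-- the substitution x ↦ x⁻¹ -/
noncomputable def phi : F[X] →+* (F[X] ⧸ Ideal.span {(X ^ m - C lam : F[X])}) :=
  eval₂RingHom ((qmk m lam).comp (C : F →+* F[X])) (xinv m lam)

theorem phi_C (c : F) : phi m lam (C c) = qmk m lam (C c) := by
  rw [phi, coe_eval₂RingHom, eval₂_C]; rfl

theorem phi_X : phi m lam X = xinv m lam := by
  rw [phi]; exact eval₂_X _ _

theorem qmk_X_pow_mul_xinv_pow (hm : 0 < m) {lam : F} (hl : lam * lam = 1)
    {i N : ℕ} (h : i ≤ N) :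
    (qmk m lam X) ^ N * (xinv m lam) ^ i = (qmk m lam X) ^ (N - i) := by
  have h1 : (qmk m lam X) ^ N = (qmk m lam X) ^ (N - i) * (qmk m lam X) ^ i := by
    rw [← pow_add]; congr 1; omega
  rw [h1, mul_assoc, ← mul_pow, qmk_X_mul_xinv m hm hl, one_pow, mul_one]

theorem phi_P (hm : 0 < m) {lam : F} (hl : lam * lam = 1) :
    phi m lam (X ^ m - C lam) = 0 := by
  have hx := qmk_X_mul_xinv m hm hl
  have h1 : qmk m lam (C lam) * (xinv m lam) ^ m = 1 := by
    have := congrArg (· ^ m) hx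
    simp only [mul_pow, one_pow] at this
    rw [← this, ← map_pow]
    congr 1
    refine qmk_congr m lam ⟨-1, by ring⟩
  have h2 : qmk m lam (C lam) * qmk m lam (C lam) = 1 := by
    rw [← map_mul, ← C_mul, hl, C_1, map_one]
  have h3 : (xinv m lam) ^ m = qmk m lam (C lam) := by
    calc (xinv m lam) ^ m = (qmk m lam (C lam) * qmk m lam (C lam)) * (xinv m lam) ^ m := by
            rw [h2]; ring
      _ = qmk m lam (C lam) * (qmk m lam (C lam) * (xinv m lam) ^ m) := by ring
      _ = qmk m lam (C lam) := by rw [h1, mul_one]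
  rw [map_sub, map_pow, phi_X, phi_C, h3, sub_self]

theorem phi_mod (hm : 0 < m) {lam : F} (hl : lam * lam = 1) (v : F[X]) :
    phi m lam v = phi m lam (v %ₘ (X ^ m - C lam)) := by
  have hP : (X ^ m - C lam).Monic := monic_X_pow_sub_C lam hm.ne'
  conv_lhs => rw [← modByMonic_add_div v (X ^ m - C lam)]
  rw [map_add, map_mul, phi_P m hm hl, zero_mul, add_zero]

theorem reflect_sum {ι : Type*} (N : ℕ) (s : Finset ι) (f : ι → F[X]) :
    reflect N (∑ i ∈ s, f i) = ∑ i ∈ s, reflect N (f i) := by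
  classical
  induction s using Finset.induction_on with
  | empty => simp [reflect_zero]
  | insert x s hx ih =>
    rw [Finset.sum_insert hx, Finset.sum_insert hx, reflect_add, ih]

theorem qmk_reflect (hm : 0 < m) {lam : F} (hl : lam * lam = 1)
    {N : ℕ} {v : F[X]} (hv : v.natDegree ≤ N) :
    qmk m lam (reflect N v) = (qmk m lam X) ^ N * phi m lam v := by
  conv_lhs => rw [Polynomial.as_sum_range' v (N + 1) (by omega)]
  conv_rhs => rw [Polynomial.as_sum_range' v (N + 1) (by omega)]
  rw [reflect_sum, map_sum, map_sum, Finset.mul_sum]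
  refine Finset.sum_congr rfl fun i hif => ?_
  have hi : i ≤ N := by have := Finset.mem_range.1 hif; omega
  rw [← C_mul_X_pow_eq_monomial, reflect_C_mul_X_pow, revAt_le hi, map_mul, map_mul,
    map_pow, map_pow, phi_C, phi_X, ← qmk_X_pow_mul_xinv_pow m hm hl hi]
  ring

theorem qmk_reverse (hm : 0 < m) {lam : F} (hl : lam * lam = 1) (v : F[X]) :
    qmk m lam v.reverse = (qmk m lam X) ^ v.natDegree * phi m lam v :=
  qmk_reflect m hm hl le_rfl

end Quot


theorem dvd_transfer {m : ℕ} (hm : 0 < m) {lam : F} (hl : lam * lam = 1)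
    {n n' : ℕ} {z : F[X] ⧸ Ideal.span {(X ^ m - C lam : F[X])}} {v w : F[X]}
    (hv : qmk m lam v = (qmk m lam X) ^ n * z)
    (hw : qmk m lam w = (qmk m lam X) ^ n' * z) :
    ((X ^ m - C lam) ∣ v ↔ (X ^ m - C lam) ∣ w) := by
  rw [← qmk_eq_zero_iff, ← qmk_eq_zero_iff, hv, hw,
    ((isUnit_qmk_X m hm hl).pow n).mul_right_eq_zero,
    ((isUnit_qmk_X m hm hl).pow n').mul_right_eq_zero]

theorem qmk_mod (hm : 0 < m) (lam : F) (v : F[X]) :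
    qmk m lam (v %ₘ (X ^ m - C lam)) = qmk m lam v :=
  (qmk_congr m lam (mod_mod_dvd hm lam v)).symm

theorem qmk_mul_reflect_mod (hm : 0 < m) {lam : F} (hl : lam * lam = 1) (u v : F[X]) :
    qmk m lam ((u %ₘ (X ^ m - C lam)) * reflect (m - 1) (v %ₘ (X ^ m - C lam)))
      = (qmk m lam X) ^ (m - 1) * (qmk m lam u * phi m lam v) := by
  rw [map_mul, qmk_mod hm lam u,
    qmk_reflect m hm hl (show (v %ₘ (X ^ m - C lam)).natDegree ≤ m - 1 from by
      have := natDeg_mod_lt hm lam v; omega),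
    ← phi_mod m hm hl v]
  ring

theorem transfer1 {m : ℕ} (hm : 0 < m) {lam : F} (hl : lam * lam = 1) (g11 g22 : F[X]) :
    ((X ^ m - C lam) ∣ (g11 %ₘ (X ^ m - C lam)) * reflect (m - 1) (g22 %ₘ (X ^ m - C lam))
      ↔ (X ^ m - C lam) ∣ g11 * g22.reverse) := by
  refine dvd_transfer hm hl (z := qmk m lam g11 * phi m lam g22)
    (n' := g22.natDegree) (qmk_mul_reflect_mod hm hl g11 g22) ?_
  rw [map_mul, qmk_reverse m hm hl g22]
  ring

theorem transfer2 {m : ℕ} (hm : 0 < m) {lam : F} (hl : lam * lam = 1) (g11 g12 : F[X]) :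
    ((X ^ m - C lam) ∣ ((g11 %ₘ (X ^ m - C lam)) * reflect (m - 1) (g12 %ₘ (X ^ m - C lam))
        + (g12 %ₘ (X ^ m - C lam)) * reflect (m - 1) ((-g11) %ₘ (X ^ m - C lam)))
      ↔ (X ^ m - C lam) ∣
          X ^ g11.natDegree * g11 * g12.reverse - X ^ g12.natDegree * g12 * g11.reverse) := by
  refine dvd_transfer hm hl
    (z := qmk m lam g11 * phi m lam g12 - qmk m lam g12 * phi m lam g11)
    (n := m - 1) (n' := g11.natDegree + g12.natDegree) ?_ ?_
  · rw [map_add, qmk_mul_reflect_mod hm hl g11 g12, qmk_mul_reflect_mod hm hl g12 (-g11),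
      map_neg]
    ring
  · rw [map_sub, map_mul, map_mul, map_mul, map_mul, map_pow, map_pow,
      qmk_reverse m hm hl g12, qmk_reverse m hm hl g11, pow_add]
    ring

end Stmt19

/-- Let `λ = ±1`, `R = F_q[x]/(x^m - λ)`, and let `C ⊆ R²` be generated by
`g₁ = (g₁₁, g₁₂)` and `g₂ = (0, g₂₂)` with `g₁₁, g₂₂ ∣ x^m - λ`.  With the symplectic
product `⟨(a,b),(a',b')⟩_s = ⟨a,b'⟩_e - ⟨b,a'⟩_e` (Euclidean products of the
coefficient vectors of the canonical representatives mod `x^m - λ`), `C` is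
symplectic self-orthogonal if and only if
(1) `g₁₁ g₂₂* ≡ 0 (mod x^m - λ)` and
(2) `x^{deg g₁₁} g₁₁ g₁₂* - x^{deg g₁₂} g₁₂ g₁₁* ≡ 0 (mod x^m - λ)`.
Elements of `C` are exactly the reductions of `r₁·g₁ + r₂·g₂` for `r₁, r₂ ∈ F_q[x]`. -/
theorem stmt19 {F : Type*} [Field F] [Fintype F] (m : ℕ) (hm : 0 < m) (lam : F)
    (hlam : lam = 1 ∨ lam = -1) (g11 g12 g22 : F[X])
    (h11 : g11 ∣ X ^ m - C lam) (h22 : g22 ∣ X ^ m - C lam) :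
    let P : F[X] := X ^ m - C lam
    let e : F[X] → F[X] → F := fun a b => ∑ i ∈ range m, (a %ₘ P).coeff i * (b %ₘ P).coeff i
    let s : F[X] → F[X] → F[X] → F[X] → F := fun a b a' b' => e a b' - e b a'
    (∀ r₁ r₂ t₁ t₂ : F[X],
        s (r₁ * g11) (r₁ * g12 + r₂ * g22) (t₁ * g11) (t₁ * g12 + t₂ * g22) = 0) ↔
      (P ∣ g11 * g22.reverse ∧
        P ∣ X ^ g11.natDegree * g11 * g12.reverse - X ^ g12.natDegree * g12 * g11.reverse) := by
  intro P e s
  have hl : lam * lam = 1 := by rcases hlam with h | h <;> rw [h] <;> ring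
  have heq : ∀ a b : F[X], e a b = Stmt19.ee m lam a b := fun a b => rfl
  show (∀ r₁ r₂ t₁ t₂ : F[X],
      e (r₁ * g11) (t₁ * g12 + t₂ * g22) - e (r₁ * g12 + r₂ * g22) (t₁ * g11) = 0) ↔ _
  simp only [heq]
  -- condition (1)
  have hA : (∀ r t : F[X], Stmt19.ee m lam (r * g11) (t * g22) = 0)
      ↔ (X ^ m - C lam) ∣ g11 * g22.reverse := by
    have h := Stmt19.main hm hl g11 g22 0 0
    simp only [mul_zero, Stmt19.ee_zero_right, add_zero, zero_modByMonic, zero_mul] at h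
    rw [h]
    exact Stmt19.transfer1 hm hl g11 g22
  -- condition (2)
  have hC : (∀ r t : F[X],
        Stmt19.ee m lam (r * g11) (t * g12) - Stmt19.ee m lam (r * g12) (t * g11) = 0)
      ↔ (X ^ m - C lam) ∣
          X ^ g11.natDegree * g11 * g12.reverse - X ^ g12.natDegree * g12 * g11.reverse := by
    have h := Stmt19.main hm hl g11 g12 g12 (-g11)
    rw [← Stmt19.transfer2 hm hl g11 g12, ← h]
    constructor <;> intro H r t <;> have h2 := H r t
    · rw [mul_neg, Stmt19.ee_neg_right]
      linear_combination h2
    · rw [mul_neg, Stmt19.ee_neg_right] at h2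
      linear_combination h2
  rw [← hA, ← hC]
  constructor
  · intro H
    constructor
    · intro r t
      have h1 := H r 0 0 t
      simp only [zero_mul, zero_add, add_zero, Stmt19.ee_zero_right, sub_zero] at h1
      exact h1
    · intro r t
      have h1 := H r 0 t 0
      rw [zero_mul, add_zero, add_zero] at h1
      exact h1
  · rintro ⟨h1, h2⟩ r₁ r₂ t₁ t₂
    rw [Stmt19.ee_add_right, Stmt19.ee_add_left]
    have e1 := h1 r₁ t₂
    have e2 := h1 t₁ r₂
    have e3 := h2 r₁ t₁
    have e4 : Stmt19.ee m lam (r₂ * g22) (t₁ * g11)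
        = Stmt19.ee m lam (t₁ * g11) (r₂ * g22) := Stmt19.ee_comm m lam _ _
    linear_combination e1 - e2 + e3 - e4
end
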